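/- arXiv:2405.19676 — 3 statements merged into one kernel-verified Lean document; each statement's English description precedes it below -/
import Mathlib

section
/- Let R be a commutative ring and A an R-algebra. If F : Mod_A → Mod_R is an R-linear functor commuting with arbitrary direct sums that is exact, then the A-module F(A) (with structure as in the Eilenberg–Watts theorem) is flat over A. -/
open CategoryTheory CategoryTheory.Limits TensorProduct

universe u

section

variable {R : Type u} [CommRing R] {A : Type u} [CommRing A] [Algebra R A]
variable (F : ModuleCat.{u} A ⥤ ModuleCat.{u} R)

/-- The ring homomorphism `A → End_R(F(A))`, `a ↦ F(a · id) = F(mult. by a)`. -/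
noncomputable def ewRingHom [F.Additive] :
    A →+* Module.End R (F.obj (ModuleCat.of A A)) where
  toFun a := ((F.map (ModuleCat.ofHom (Algebra.lmul A A a))).hom :
    F.obj (ModuleCat.of A A) →ₗ[R] F.obj (ModuleCat.of A A))
  map_one' := by
    have h : ModuleCat.ofHom (Algebra.lmul A A 1) = 𝟙 (ModuleCat.of A A) := by
      ext x; simp
    show (F.map (ModuleCat.ofHom (Algebra.lmul A A 1))).hom = _
    rw [h, F.map_id]; rfl
  map_mul' a b := by
    have h : ModuleCat.ofHom (Algebra.lmul A A (a * b)) =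
        ModuleCat.ofHom (Algebra.lmul A A b) ≫ ModuleCat.ofHom (Algebra.lmul A A a) := by
      ext x
      simp [mul_assoc]
    show (F.map (ModuleCat.ofHom (Algebra.lmul A A (a * b)))).hom = _
    rw [h, F.map_comp]; rfl
  map_zero' := by
    have h : ModuleCat.ofHom (Algebra.lmul A A 0) = (0 : ModuleCat.of A A ⟶ ModuleCat.of A A) := by
      have h0 : Algebra.lmul A A (0 : A) = 0 := map_zero _
      rw [h0]; rfl
    show (F.map (ModuleCat.ofHom (Algebra.lmul A A 0))).hom = _
    rw [h, F.map_zero] <;> rfl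
  map_add' a b := by
    have h : ModuleCat.ofHom (Algebra.lmul A A (a + b)) =
        ModuleCat.ofHom (Algebra.lmul A A a) + ModuleCat.ofHom (Algebra.lmul A A b) := by
      have h0 : Algebra.lmul A A (a + b) = Algebra.lmul A A a + Algebra.lmul A A b :=
        map_add _ a b
      rw [h0]; rfl
    show (F.map (ModuleCat.ofHom (Algebra.lmul A A (a + b)))).hom = _
    rw [h, F.map_add] <;> rfl

/-- The `A`-module structure on `F(A)` induced by `a ↦ F(a · id)`. -/
noncomputable local instance ewModule [F.Additive] :
    Module A (F.obj (ModuleCat.of A A)) :=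
  Module.compHom _ (ewRingHom F)


/-- If `F : Mod_A ⥤ Mod_R` is an `R`-linear exact functor commuting with arbitrary direct
sums, then the `A`-module `F(A)` (with structure from the Eilenberg–Watts theorem, i.e.
induced by `a ↦ F(a · id)`) is flat over `A`. -/
theorem eilenberg_watts_flat [F.Additive]
    (hlin : ∀ (r : R) (X Y : ModuleCat.{u} A) (f : X ⟶ Y),
      F.map ((algebraMap R A r) • f) = r • F.map f)
    [PreservesFiniteLimits F] [PreservesFiniteColimits F]
    [∀ J : Type u, PreservesColimitsOfShape (Discrete J) F] :
    Module.Flat A (F.obj (ModuleCat.of A A)) := by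
  classical
  refine Module.Flat.of_forall_isTrivialRelation ?_
  intro n f x hfx
  let ι := Fin n
  have hsmul : ∀ (a : A) (m : F.obj (ModuleCat.of A A)),
      a • m = (F.map (ModuleCat.ofHom (Algebra.lmul A A a))) m := fun _ _ => rfl
  -- the map `A^ι → A`, `g ↦ ∑ f i * g i`
  set φ : (ι → A) →ₗ[A] A :=
    LinearMap.lsum A (fun _ : ι => A) A (fun i => Algebra.lmul A A (f i)) with hφdef
  set K := LinearMap.ker φ with hKdef
  -- the element `X ∈ F(A^ι)` corresponding to `(x i)`
  set X : F.obj (ModuleCat.of A (ι → A)) :=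
    ∑ i, F.map (ModuleCat.ofHom (LinearMap.single A (fun _ : ι => A) i)) (x i) with hXdef
  have hcompσ : ∀ i : ι,
      ModuleCat.ofHom (LinearMap.single A (fun _ : ι => A) i) ≫ ModuleCat.ofHom φ =
        ModuleCat.ofHom (Algebra.lmul A A (f i)) := by
    intro i
    ext a
    simp [φ, LinearMap.lsum_apply, LinearMap.comp_apply, Pi.single_apply]
    convert Finset.sum_ite_eq' Finset.univ i f using 1 <;> simp
  have hXφ : F.map (ModuleCat.ofHom φ) X = 0 := by
    rw [hXdef, map_sum]
    have : ∀ i : ι, F.map (ModuleCat.ofHom φ)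
        (F.map (ModuleCat.ofHom (LinearMap.single A (fun _ : ι => A) i)) (x i)) = f i • x i := by
      intro i
      rw [hsmul, ← hcompσ i, F.map_comp]
      rfl
    rw [Finset.sum_congr rfl fun i _ => this i]
    exact hfx
  -- exactness : `X` comes from `F(K)`
  have hzero : ModuleCat.ofHom K.subtype ≫ ModuleCat.ofHom φ = 0 := by
    ext k
    exact k.2
  set S : ShortComplex (ModuleCat.{u} A) :=
    ShortComplex.mk (ModuleCat.ofHom K.subtype) (ModuleCat.ofHom φ) hzero with hSdef
  have hS : S.Exact := by
    rw [ShortComplex.moduleCat_exact_iff]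
    intro g hg
    exact ⟨⟨g, hg⟩, rfl⟩
  have hSF : (S.map F).Exact := hS.map F
  obtain ⟨Y, hY0⟩ := (ShortComplex.moduleCat_exact_iff (S.map F)).mp hSF X hXφ
  have hY : F.map (ModuleCat.ofHom K.subtype) Y = X := hY0
  -- `F` of the surjection `(K →₀ A) → K` is surjective
  set p : (K →₀ A) →ₗ[A] K := Finsupp.linearCombination A (fun k : K => k) with hpdef
  have hpsurj : Function.Surjective p := by
    intro k
    exact ⟨Finsupp.single k 1, by simp [p]⟩
  have hepi : Epi (ModuleCat.ofHom p) := (ModuleCat.epi_iff_surjective _).mpr hpsurj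
  have hFp : Function.Surjective (F.map (ModuleCat.ofHom p)) := by
    rw [← ModuleCat.epi_iff_surjective]
    exact F.map_epi _
  obtain ⟨Z, hZ⟩ := hFp Y
  -- `F(K →₀ A)` is spanned by the images of the coproduct inclusions
  set c : Cofan (fun _ : K => ModuleCat.of A A) :=
    Cofan.mk (ModuleCat.of A (K →₀ A)) (fun k => ModuleCat.ofHom (Finsupp.lsingle k)) with hcdef
  have hc : IsColimit c :=
    mkCofanColimit c
      (fun t => ModuleCat.ofHom (Finsupp.lsum A (fun k : K => ((t.inj k).hom : A →ₗ[A] t.pt))))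
      (by
        intro t k
        ext : 1; refine LinearMap.ext fun a => ?_
        show (Finsupp.lsum A fun k : K => ((t.inj k).hom : A →ₗ[A] t.pt)) (Finsupp.single k a) =
          t.inj k a
        simp)
      (by
        intro t m hm
        ext : 1; refine Finsupp.lhom_ext fun k a => ?_
        have h3 := congrArg (fun (h : ModuleCat.of A A ⟶ t.pt) => h a) (hm k)
        simpa [c, ModuleCat.ofHom, Finsupp.lsum_single] using h3)
  have hcF : IsColimit (F.mapCocone c) := isColimitOfPreserves F hc
  let L : K → (F.obj (ModuleCat.of A ((K : Type u) →₀ A)) →ₗ[R]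
      F.obj (ModuleCat.of A ((K : Type u) →₀ A))) := fun _ => LinearMap.id
  set W : Submodule R (F.obj (ModuleCat.of A ((K : Type u) →₀ A))) :=
    ⨆ k : K, LinearMap.range
      (F.map (ModuleCat.ofHom (Finsupp.lsingle k : A →ₗ[A] ((K : Type u) →₀ A)))).hom with hWdef
  have hWtop : W = ⊤ := by
    have hq : ModuleCat.ofHom W.mkQ = (0 : F.obj (ModuleCat.of A (K →₀ A)) ⟶
        ModuleCat.of R (F.obj (ModuleCat.of A (K →₀ A)) ⧸ W)) := by
      refine hcF.hom_ext fun j => ?_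
      obtain ⟨k⟩ := j
      ext z
      show W.mkQ (F.map (ModuleCat.ofHom (Finsupp.lsingle k)) z) = 0
      rw [Submodule.mkQ_apply, Submodule.Quotient.mk_eq_zero]
      exact Submodule.mem_iSup_of_mem k ⟨z, rfl⟩
    rw [Submodule.eq_top_iff']
    intro m
    have : W.mkQ m = 0 := congrFun (congrArg (fun (h : F.obj (ModuleCat.of A (K →₀ A)) ⟶
        ModuleCat.of R (F.obj (ModuleCat.of A (K →₀ A)) ⧸ W)) => ⇑h.hom) hq) m
    exact (Submodule.Quotient.mk_eq_zero W).mp this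
  have hZW : Z ∈ W := hWtop ▸ Submodule.mem_top
  rw [hWdef, Submodule.mem_iSup_iff_exists_finsupp] at hZW
  obtain ⟨μ, hμmem, hμsum⟩ := hZW
  choose w hw using fun k : K => hμmem k
  -- the composite `A → (K →₀ A) → K → A^ι → A` is multiplication by `k i`
  have hcomp : ∀ (k : K) (i : ι),
      ModuleCat.ofHom (Finsupp.lsingle k) ≫ ModuleCat.ofHom p ≫ ModuleCat.ofHom K.subtype ≫
        ModuleCat.ofHom (LinearMap.proj i : (ι → A) →ₗ[A] A) =
      ModuleCat.ofHom (Algebra.lmul A A ((k : ι → A) i)) := by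
    intro k i
    ext : 1; refine LinearMap.ext fun (a : A) => ?_
    show (LinearMap.proj i : (ι → A) →ₗ[A] A) (K.subtype (p (Finsupp.single k a))) =
      (Algebra.lmul A A ((k : ι → A) i)) a
    simp [p, mul_comm]
  -- projecting `X` gives back `x i`
  have hproj : ∀ i : ι,
      F.map (ModuleCat.ofHom (LinearMap.proj i : (ι → A) →ₗ[A] A)) X = x i := by
    intro i
    rw [hXdef, map_sum]
    rw [Finset.sum_eq_single i]
    · have : ModuleCat.ofHom (LinearMap.single A (fun _ : ι => A) i) ≫
          ModuleCat.ofHom (LinearMap.proj i : (ι → A) →ₗ[A] A) = 𝟙 (ModuleCat.of A A) := by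
        ext a; simp
      rw [show F.map (ModuleCat.ofHom (LinearMap.proj i : (ι → A) →ₗ[A] A))
            (F.map (ModuleCat.ofHom (LinearMap.single A (fun _ : ι => A) i)) (x i)) =
          F.map (ModuleCat.ofHom (LinearMap.single A (fun _ : ι => A) i) ≫
            ModuleCat.ofHom (LinearMap.proj i : (ι → A) →ₗ[A] A)) (x i) from by
          rw [F.map_comp]; rfl]
      rw [this, F.map_id]
      rfl
    · intro j _ hji
      have : ModuleCat.ofHom (LinearMap.single A (fun _ : ι => A) j) ≫
          ModuleCat.ofHom (LinearMap.proj i : (ι → A) →ₗ[A] A) =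
          (0 : ModuleCat.of A A ⟶ ModuleCat.of A A) := by
        ext : 1; refine LinearMap.ext fun (a : A) => ?_
        show (LinearMap.proj i : (ι → A) →ₗ[A] A) (Pi.single j a) = (0 : A →ₗ[A] A) a
        simp [Pi.single_apply, hji]
      rw [show F.map (ModuleCat.ofHom (LinearMap.proj i : (ι → A) →ₗ[A] A))
            (F.map (ModuleCat.ofHom (LinearMap.single A (fun _ : ι => A) j)) (x j)) =
          F.map (ModuleCat.ofHom (LinearMap.single A (fun _ : ι => A) j) ≫
            ModuleCat.ofHom (LinearMap.proj i : (ι → A) →ₗ[A] A)) (x j) from by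
          rw [F.map_comp]; rfl]
      rw [this, F.map_zero]
      exact LinearMap.zero_apply _
    · simp
  -- assemble the trivial relation
  suffices key : ∃ (κ : Type u) (_ : Fintype κ) (a : ι → κ → A)
      (y : κ → F.obj (ModuleCat.of A A)),
      (∀ i, x i = ∑ j, a i j • y j) ∧ ∀ j, ∑ i, f i * a i j = 0 by
    obtain ⟨κ, _, a, y, h1, h2⟩ := key
    let e := Fintype.equivFin κ
    refine ⟨Fintype.card κ, fun i j => a i (e.symm j), fun j => y (e.symm j), fun i => ?_,
      fun j => h2 _⟩
    rw [h1 i]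
    exact (Equiv.sum_comp e.symm (fun j => a i j • y j)).symm
  refine ⟨↥μ.support, inferInstance, fun i t => ((t : K) : ι → A) i, fun t => w t, ?_, ?_⟩
  · intro i
    have hx : x i =
        F.map (ModuleCat.ofHom (LinearMap.proj i : (ι → A) →ₗ[A] A))
          (F.map (ModuleCat.ofHom K.subtype) (F.map (ModuleCat.ofHom p) Z)) := by
      rw [hZ, hY, hproj i]
    have hZsum : Z = ∑ t ∈ μ.support.attach,
        F.map (ModuleCat.ofHom (Finsupp.lsingle (t : K))) (w t) := by
      rw [← hμsum, Finsupp.sum, ← Finset.sum_attach μ.support fun k => μ k]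
      exact Finset.sum_congr rfl fun t _ => (hw t).symm
    rw [hx, hZsum, map_sum, map_sum, map_sum]
    rw [show (Finset.univ : Finset ↥μ.support) = μ.support.attach from rfl]
    refine Finset.sum_congr rfl fun t _ => ?_
    rw [hsmul, ← hcomp (t : K) i, F.map_comp, F.map_comp, F.map_comp]
    rfl
  · intro t
    have ht : φ ((t : K) : ι → A) = 0 := (t : K).2
    have hφ : ∀ g : ι → A, φ g = ∑ i, f i * g i := fun g => by
      simp [φ, LinearMap.lsum_apply, LinearMap.comp_apply]
      rfl
    rw [← hφ]
    exact ht

end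
end

section
/- Let F, G : D → D' be exact functors between triangulated categories, with F fully faithful and admitting both adjoints, so that the essential image 𝒜 of F is an admissible (left and right admissible) triangulated subcategory of D'. Let Ω be a spanning class of D. If F(ω) ≅ G(ω) for every ω ∈ Ω and G has a right adjoint R, then the essential image of G is contained in 𝒜; i.e., for any M ∈ 𝒜^⊥ := {M : Hom(A, M[i]) = 0 ∀ A ∈ 𝒜, i ∈ ℤ}, one has R(M) = 0 and hence Hom(G(X), M[i]) = 0 for all X and i. -/
/-!
Transposing along `G ⊣ R` and the shift, a morphism `ω ⟶ (R M)⟦i⟧` corresponds to a morphism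
`G (ω⟦-i⟧) ⟶ M`. Since `F` and `G` commute with shifts and agree on `Ω`, the source is isomorphic
to `F (ω⟦-i⟧)`, which has no nonzero morphisms to `M`; as `Ω` spans, `R M = 0`. Every shift
`M⟦i⟧` is orthogonal to the image of `F` as well, so `R (M⟦i⟧) = 0`, and by adjunction
`Hom(G X, M⟦i⟧) = Hom(X, R (M⟦i⟧)) = 0`.
-/

open CategoryTheory CategoryTheory.Limits

namespace CategoryTheory

variable {C D : Type*} [Category C] [Category D] [HasZeroMorphisms C] [HasZeroMorphisms D]

lemma Adjunction.homEquiv_symm_eq_zero_iff {L : C ⥤ D} {R : D ⥤ C} (adj : L ⊣ R) {X : C} {Y : D}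
    (f : X ⟶ R.obj Y) : (adj.homEquiv X Y).symm f = 0 ↔ f = 0 := by
  have := adj.isLeftAdjoint
  have symm_zero : (adj.homEquiv X Y).symm 0 = 0 := by
    rw [Adjunction.homEquiv_counit, L.map_zero, zero_comp]
  rw [← symm_zero, (adj.homEquiv X Y).symm.injective.eq_iff]

section Shift

variable {A : Type*} [AddMonoid A] [HasShift C A]

lemma eq_zero_of_forall_hom_shift_eq_zero {X Y : C} (h : ∀ (i : A) (f : X ⟶ Y⟦i⟧), f = 0)
    (f : X ⟶ Y) : f = 0 :=
  (cancel_mono ((shiftFunctorZero C A).inv.app Y)).1 ((h 0 _).trans zero_comp.symm)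

lemma hom_shift_shift_eq_zero {X Y : C} (h : ∀ (i : A) (f : X ⟶ Y⟦i⟧), f = 0) (n i : A)
    (f : X ⟶ Y⟦n⟧⟦i⟧) : f = 0 :=
  (cancel_mono ((shiftFunctorAdd C n i).inv.app Y)).1 ((h _ _).trans zero_comp.symm)

variable [HasShift D A]

def Functor.shiftObjIsoOfObjIso (F G : C ⥤ D) [F.CommShift A] [G.CommShift A] {X : C}
    (e : F.obj X ≅ G.obj X) (n : A) : F.obj (X⟦n⟧) ≅ G.obj (X⟦n⟧) :=
  (F.commShiftIso n).app X ≪≫ (shiftFunctor D n).mapIso e ≪≫ ((G.commShiftIso n).app X).symm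

end Shift

variable {A : Type*} [AddGroup A] [HasShift C A]

lemma Adjunction.eq_zero_of_hom_shift {G : C ⥤ D} {R : D ⥤ C} (adj : G ⊣ R) {X : C} {Y : D}
    {i : A} (f : X ⟶ (R.obj Y)⟦i⟧) (h : ∀ g : G.obj (X⟦-i⟧) ⟶ Y, g = 0) : f = 0 :=
  (((shiftEquiv' C (-i) i (neg_add_cancel i)).toAdjunction.comp adj).homEquiv_symm_eq_zero_iff
    f).1 (h _)

variable [HasShift D A]

lemma isZero_rightAdjoint_obj_of_agree_on_spanning (F G : C ⥤ D) [F.CommShift A] [G.CommShift A]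
    {R : D ⥤ C} (adj : G ⊣ R) (Ω : Set C)
    (hspan : ∀ K : C, (∀ ω ∈ Ω, ∀ (i : A) (f : ω ⟶ K⟦i⟧), f = 0) → IsZero K)
    (hagree : ∀ ω ∈ Ω, Nonempty (F.obj ω ≅ G.obj ω))
    (N : D) (hN : ∀ (X : C) (i : A) (f : F.obj X ⟶ N⟦i⟧), f = 0) : IsZero (R.obj N) := by
  refine hspan _ fun ω hω i f => adj.eq_zero_of_hom_shift f fun g => ?_
  obtain ⟨e⟩ := hagree ω hω
  have hFg := eq_zero_of_forall_hom_shift_eq_zero (hN _) ((F.shiftObjIsoOfObjIso G e (-i)).hom ≫ g)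
  exact (cancel_epi _).1 (hFg.trans comp_zero.symm)

end CategoryTheory

/-- Let `F, G : D ⥤ D'` be exact functors between triangulated categories with `F` fully
faithful admitting both adjoints (so its essential image is admissible), let `Ω` be a
spanning class of `D`, and let `R` be a right adjoint of `G`. If `F ω ≅ G ω` for every
`ω ∈ Ω`, then the essential image of `G` is contained in that of `F`: for any `M` right
orthogonal to the essential image of `F` (i.e. `Hom(F A, M[i]) = 0` for all `A, i`), one
has `R M = 0` and hence `Hom(G X, M[i]) = 0` for all `X, i`. -/
theorem essImage_contained_of_agree_on_spanning
    (D : Type*) [Category D] [Preadditive D] [HasZeroObject D]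
    [HasShift D ℤ] [∀ n : ℤ, (shiftFunctor D n).Additive] [Pretriangulated D]
    (D' : Type*) [Category D'] [Preadditive D'] [HasZeroObject D']
    [HasShift D' ℤ] [∀ n : ℤ, (shiftFunctor D' n).Additive] [Pretriangulated D']
    (F G : D ⥤ D') [F.CommShift ℤ] [F.IsTriangulated] [F.Full] [F.Faithful]
    [G.CommShift ℤ] [G.IsTriangulated]
    (FL FR : D' ⥤ D) (adjFL : FL ⊣ F) (adjFR : F ⊣ FR)
    (R : D' ⥤ D) (adjR : G ⊣ R)
    (Ω : Set D)
    (hspan₁ : ∀ K : D, (∀ ω ∈ Ω, ∀ i : ℤ, ∀ f : ω ⟶ K⟦i⟧, f = 0) → IsZero K)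
    (hspan₂ : ∀ K : D, (∀ ω ∈ Ω, ∀ i : ℤ, ∀ f : K ⟶ ω⟦i⟧, f = 0) → IsZero K)
    (hagree : ∀ ω ∈ Ω, Nonempty (F.obj ω ≅ G.obj ω))
    (M : D') (hM : ∀ (A : D) (i : ℤ) (f : F.obj A ⟶ M⟦i⟧), f = 0) :
    IsZero (R.obj M) ∧ ∀ (X : D) (i : ℤ) (g : G.obj X ⟶ M⟦i⟧), g = 0 := by
  have isZero_of_orthogonal :=
    isZero_rightAdjoint_obj_of_agree_on_spanning F G adjR Ω hspan₁ hagree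
  refine ⟨isZero_of_orthogonal M hM, fun X i g => ?_⟩
  have hRMi : IsZero (R.obj (M⟦i⟧)) :=
    isZero_of_orthogonal _ fun A j => hom_shift_shift_eq_zero (hM A) i j
  simpa using (adjR.homEquiv_symm_eq_zero_iff (adjR.homEquiv X _ g)).2 (hRMi.eq_of_tgt _ _)
end

section
/- Let D, D' be triangulated categories, F : D → D' an exact functor with left adjoint L and right adjoint R, and let Ω be a spanning class of D. If for all ω₁, ω₂ ∈ Ω and all i ∈ ℤ the map Hom_D(ω₁, ω₂[i]) → Hom_{D'}(F(ω₁), F(ω₂)[i]) induced by F is bijective, then F is fully faithful. -/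
open CategoryTheory CategoryTheory.Limits CategoryTheory.Pretriangulated

namespace BondalOrlovAux

variable {D : Type*} [Category D] {D' : Type*} [Category D']

lemma postcomp_bij {X A B : D} (e : A ≅ B) :
    Function.Bijective (fun f : X ⟶ A => f ≫ e.hom) :=
  (Equiv.mk (fun f : X ⟶ A => f ≫ e.hom) (fun g => g ≫ e.inv)
    (fun f => by simp) (fun g => by simp)).bijective

lemma bij_of_iso_left (F : D ⥤ D') {X X' Y : D} (e : X' ≅ X)
    (h : Function.Bijective (F.map : (X ⟶ Y) → (F.obj X ⟶ F.obj Y))) :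
    Function.Bijective (F.map : (X' ⟶ Y) → (F.obj X' ⟶ F.obj Y)) := by
  constructor
  · intro f₁ f₂ hf
    have h1 : e.inv ≫ f₁ = e.inv ≫ f₂ := h.1 (by rw [F.map_comp, F.map_comp, hf])
    have := congrArg (fun t => e.hom ≫ t) h1
    simpa using this
  · intro w
    obtain ⟨g, hg⟩ := h.2 (F.map e.inv ≫ w)
    refine ⟨e.hom ≫ g, ?_⟩
    rw [F.map_comp, hg, ← Category.assoc, ← F.map_comp, e.hom_inv_id, F.map_id,
      Category.id_comp]

lemma bij_of_iso_right (F : D ⥤ D') {X Y Y' : D} (e : Y ≅ Y')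
    (h : Function.Bijective (F.map : (X ⟶ Y) → (F.obj X ⟶ F.obj Y))) :
    Function.Bijective (F.map : (X ⟶ Y') → (F.obj X ⟶ F.obj Y')) := by
  constructor
  · intro f₁ f₂ hf
    have h1 : f₁ ≫ e.inv = f₂ ≫ e.inv := h.1 (by rw [F.map_comp, F.map_comp, hf])
    have := congrArg (fun t => t ≫ e.hom) h1
    simpa using this
  · intro w
    obtain ⟨g, hg⟩ := h.2 (w ≫ F.map e.inv)
    refine ⟨g ≫ e.hom, ?_⟩
    rw [F.map_comp, hg, Category.assoc, ← F.map_comp, e.inv_hom_id, F.map_id,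
      Category.comp_id]

lemma shift_bij (F : D ⥤ D') [HasShift D ℤ] [HasShift D' ℤ] [F.CommShift ℤ]
    (n : ℤ) {X Y : D}
    (h : Function.Bijective (F.map : (X ⟶ Y) → (F.obj X ⟶ F.obj Y))) :
    Function.Bijective
      (F.map : ((X⟦n⟧ : D) ⟶ Y⟦n⟧) → (F.obj (X⟦n⟧) ⟶ F.obj (Y⟦n⟧))) := by
  have key : ∀ f : X ⟶ Y, F.map (f⟦n⟧') =
      (F.commShiftIso n).hom.app X ≫ (F.map f)⟦n⟧' ≫ (F.commShiftIso n).inv.app Y := by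
    intro f
    have hnat := (F.commShiftIso n).hom.naturality f
    dsimp at hnat
    rw [← Category.assoc, ← hnat, Category.assoc, Iso.hom_inv_id_app]
    exact (Category.comp_id _).symm
  constructor
  · intro g₁ g₂ hg
    obtain ⟨f₁, rfl⟩ := (shiftFunctor D n).map_surjective g₁
    obtain ⟨f₂, rfl⟩ := (shiftFunctor D n).map_surjective g₂
    rw [key, key] at hg
    have h1 : (F.map f₁)⟦n⟧' ≫ (F.commShiftIso n).inv.app Y
        = (F.map f₂)⟦n⟧' ≫ (F.commShiftIso n).inv.app Y := by
      have := congrArg (fun t => CategoryTheory.inv ((F.commShiftIso n).hom.app X) ≫ t) hg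
      simpa using this
    have h2 : (F.map f₁)⟦n⟧' = (F.map f₂)⟦n⟧' := by
      have := congrArg (fun t => t ≫ CategoryTheory.inv ((F.commShiftIso n).inv.app Y)) h1
      simpa using this
    have h3 := (shiftFunctor D' n).map_injective h2
    rw [h.1 h3]
  · intro w
    obtain ⟨v, hv⟩ := (shiftFunctor D' n).map_surjective
      ((F.commShiftIso n).inv.app X ≫ w ≫ (F.commShiftIso n).hom.app Y)
    obtain ⟨f, hf⟩ := h.2 v
    refine ⟨f⟦n⟧', ?_⟩
    rw [key, hf, hv]
    simp

section Adj

variable (F : D ⥤ D') (L R : D' ⥤ D)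

lemma unit_post_eq (adjR : F ⊣ R) {X W : D} (f : X ⟶ W) :
    f ≫ adjR.unit.app W = (adjR.homEquiv X (F.obj W)) (F.map f) := by
  rw [Adjunction.homEquiv_unit]
  have := adjR.unit.naturality f
  simp only [Functor.id_map, Functor.comp_map] at this
  rw [← this]

lemma unit_post_bij (adjR : F ⊣ R) {X W : D}
    (hb : Function.Bijective (F.map : (X ⟶ W) → (F.obj X ⟶ F.obj W))) :
    Function.Bijective (fun f : X ⟶ W => f ≫ adjR.unit.app W) := by
  have he : (fun f : X ⟶ W => f ≫ adjR.unit.app W)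
      = (adjR.homEquiv X (F.obj W)) ∘ (F.map : (X ⟶ W) → _) :=
    funext fun f => unit_post_eq F R adjR f
  rw [he]
  exact (adjR.homEquiv _ _).bijective.comp hb

lemma counit_pre_eq (adjL : L ⊣ F) {X W : D} (h : X ⟶ W) :
    adjL.counit.app X ≫ h = (adjL.homEquiv (F.obj X) W).symm (F.map h) := by
  rw [Adjunction.homEquiv_counit]
  have := adjL.counit.naturality h
  simp only [Functor.id_map, Functor.comp_map] at this
  rw [← this]

lemma counit_pre_bij (adjL : L ⊣ F) (adjR : F ⊣ R) {X W : D}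
    (hW : IsIso (adjR.unit.app W)) :
    Function.Bijective (fun h : X ⟶ W => adjL.counit.app X ≫ h) := by
  have he : (fun h : X ⟶ W => adjL.counit.app X ≫ h)
      = ((adjL.homEquiv (F.obj X) W).symm ∘ (adjR.homEquiv X (F.obj W)).symm)
        ∘ (fun f : X ⟶ W => f ≫ adjR.unit.app W) := by
    funext h
    simp only [Function.comp_apply]
    rw [counit_pre_eq F L adjL h, unit_post_eq F R adjR h, Equiv.symm_apply_apply]
  rw [he]
  exact ((adjL.homEquiv _ _).symm.bijective.comp
    (adjR.homEquiv _ _).symm.bijective).comp (postcomp_bij (asIso (adjR.unit.app W)))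

lemma isIso_unit_of_iso (adjR : F ⊣ R) {W W' : D} (e : W ≅ W')
    (h : IsIso (adjR.unit.app W')) : IsIso (adjR.unit.app W) := by
  have hnat := adjR.unit.naturality e.hom
  simp only [Functor.id_map] at hnat
  have heq : adjR.unit.app W = e.hom ≫ adjR.unit.app W' ≫ (F ⋙ R).map e.inv := by
    rw [← Category.assoc, hnat, Category.assoc, ← Functor.map_comp, e.hom_inv_id]
    simp
  rw [heq]
  infer_instance

end Adj

end BondalOrlovAux

open BondalOrlovAux

/-- Bondal–Orlov criterion: let `F : D ⥤ D'` be an exact functor between triangulated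
categories with a left adjoint `L` and a right adjoint `R`, and let `Ω` be a spanning
class of `D`. If for all `ω₁, ω₂ ∈ Ω` and all `i : ℤ` the map
`Hom(ω₁, ω₂[i]) → Hom(F ω₁, (F ω₂)[i])` induced by `F` is bijective, then `F` is fully
faithful. -/
theorem bondal_orlov_criterion
    (D : Type*) [Category D] [Preadditive D] [HasZeroObject D]
    [HasShift D ℤ] [∀ n : ℤ, (shiftFunctor D n).Additive] [Pretriangulated D]
    (D' : Type*) [Category D'] [Preadditive D'] [HasZeroObject D']
    [HasShift D' ℤ] [∀ n : ℤ, (shiftFunctor D' n).Additive] [Pretriangulated D']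
    (F : D ⥤ D') [F.CommShift ℤ] [F.IsTriangulated]
    (L R : D' ⥤ D) (adjL : L ⊣ F) (adjR : F ⊣ R)
    (Ω : Set D)
    (hspan₁ : ∀ K : D, (∀ ω ∈ Ω, ∀ i : ℤ, ∀ f : ω ⟶ K⟦i⟧, f = 0) → IsZero K)
    (hspan₂ : ∀ K : D, (∀ ω ∈ Ω, ∀ i : ℤ, ∀ f : K ⟶ ω⟦i⟧, f = 0) → IsZero K)
    (hbij : ∀ ω₁ ∈ Ω, ∀ ω₂ ∈ Ω, ∀ i : ℤ,
      Function.Bijective (fun f : ω₁ ⟶ ω₂⟦i⟧ =>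
        F.map f ≫ (F.commShiftIso i).hom.app ω₂)) :
    F.Full ∧ F.Faithful := by
  -- `F.map` is bijective on `Hom(ω', ω⟦k⟧)`
  have hFmap : ∀ ω' ∈ Ω, ∀ ω ∈ Ω, ∀ k : ℤ,
      Function.Bijective (F.map : (ω' ⟶ ω⟦k⟧) → (F.obj ω' ⟶ F.obj (ω⟦k⟧))) := by
    intro ω' h' ω h k
    have hb := hbij ω' h' ω h k
    constructor
    · intro f₁ f₂ hf
      exact hb.1 (by simp only [hf])
    · intro w
      obtain ⟨f, hf⟩ := hb.2 (w ≫ (F.commShiftIso k).hom.app ω)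
      simp only at hf
      refine ⟨f, ?_⟩
      have := congrArg (fun t => t ≫ CategoryTheory.inv ((F.commShiftIso k).hom.app ω)) hf
      simpa using this
  -- `F.map` is bijective on `Hom(ω'⟦j⟧, ω⟦i⟧)`
  have lemA : ∀ ω' ∈ Ω, ∀ ω ∈ Ω, ∀ j i : ℤ,
      Function.Bijective
        (F.map : ((ω'⟦j⟧ : D) ⟶ ω⟦i⟧) → (F.obj (ω'⟦j⟧) ⟶ F.obj (ω⟦i⟧))) := by
    intro ω' h' ω h j i
    have h0 := hFmap ω' h' ω h (i - j)
    have h1 := shift_bij F j h0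
    exact bij_of_iso_right F (((shiftFunctorAdd' D (i - j) j i (by ring)).app ω).symm) h1
  -- Step 1 : the unit is an isomorphism on shifts of objects of `Ω`
  have step1 : ∀ ω ∈ Ω, ∀ i : ℤ, IsIso (adjR.unit.app (ω⟦i⟧)) := by
    intro ω hω i
    obtain ⟨Cn, p, δ, hT⟩ := distinguished_cocone_triangle (adjR.unit.app (ω⟦i⟧))
    have hvan : ∀ ω'' ∈ Ω, ∀ j : ℤ, ∀ f : (ω''⟦j⟧ : D) ⟶ Cn, f = 0 := by
      intro ω'' h'' j f
      have h1 : f ≫ δ = 0 := by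
        set E := (shiftEquiv' D (-1 : ℤ) (1 : ℤ) (by ring)).toAdjunction with hE
        have hu : (f ≫ δ) ≫ (adjR.unit.app (ω⟦i⟧))⟦(1 : ℤ)⟧' = 0 := by
          have h31 := comp_distTriang_mor_zero₃₁ _ hT
          dsimp at h31
          rw [Category.assoc, show δ ≫ (adjR.unit.app (ω⟦i⟧))⟦(1 : ℤ)⟧' = 0 from h31, comp_zero]
        set g := (E.homEquiv _ _).symm (f ≫ δ) with hg
        have hg0 : g ≫ adjR.unit.app (ω⟦i⟧) = 0 := by
          have h2 : E.homEquiv _ _ (g ≫ adjR.unit.app (ω⟦i⟧)) = 0 := by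
            rw [Adjunction.homEquiv_naturality_right, hg, Equiv.apply_symm_apply]
            exact hu
          have h3 := congrArg (E.homEquiv _ _).symm h2
          rw [Equiv.symm_apply_apply] at h3
          rw [h3]
          simp [Adjunction.homEquiv_counit]
        have hbB : Function.Bijective
            (F.map : (((ω''⟦j⟧ : D)⟦(-1 : ℤ)⟧) ⟶ ω⟦i⟧) → _) :=
          bij_of_iso_left F (((shiftFunctorAdd' D j (-1 : ℤ) (j - 1) (by ring)).app ω'').symm)
            (lemA ω'' h'' ω hω (j - 1) i)
        have hginj := (unit_post_bij F R adjR hbB).1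
        have hgz : g = 0 := hginj (show g ≫ _ = 0 ≫ _ from hg0.trans zero_comp.symm)
        have h4 : f ≫ δ = E.homEquiv _ _ 0 := by
          rw [← hgz, hg, Equiv.apply_symm_apply]
          rfl
        rw [h4]
        simp [Adjunction.homEquiv_unit]
        rfl
      obtain ⟨h, hh⟩ := Triangle.coyoneda_exact₃ _ hT f h1
      obtain ⟨k, hk⟩ := (unit_post_bij F R adjR (lemA ω'' h'' ω hω j i)).2 h
      simp only at hk
      have h12 := comp_distTriang_mor_zero₁₂ _ hT
      dsimp at h12 hh
      rw [hh, ← hk]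
      exact (Category.assoc _ _ _).trans ((congrArg _ h12).trans comp_zero)
    have hvan' : ∀ ω'' ∈ Ω, ∀ k : ℤ, ∀ f : ω'' ⟶ Cn⟦k⟧, f = 0 := by
      intro ω'' h'' k f
      set E := (shiftEquiv' D (-k) k (by ring)).toAdjunction with hE
      have h0 : (E.homEquiv _ _).symm f = 0 := hvan ω'' h'' (-k) _
      have h1 : f = E.homEquiv _ _ 0 := by
        rw [← h0]
        exact ((E.homEquiv _ _).apply_symm_apply f).symm
      rw [h1]
      simp [Adjunction.homEquiv_unit]
      rfl
    have hC : IsZero Cn := hspan₁ Cn hvan'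
    exact (Triangle.isZero₃_iff_isIso₁ _ hT).1 hC
  -- Step 2 : the counit of `adjL` is an isomorphism everywhere
  have step2 : ∀ X : D, IsIso (adjL.counit.app X) := by
    intro X
    obtain ⟨Q, q, δ, hT⟩ := distinguished_cocone_triangle (adjL.counit.app X)
    have hvan : ∀ ω ∈ Ω, ∀ i : ℤ, ∀ f : Q ⟶ ω⟦i⟧, f = 0 := by
      intro ω hω i f
      have hWi : IsIso (adjR.unit.app (ω⟦i⟧)) := step1 ω hω i
      have h1 : q ≫ f = 0 := by
        apply (counit_pre_bij F L R adjL adjR hWi).1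
        have h12 := comp_distTriang_mor_zero₁₂ _ hT
        dsimp at h12
        show adjL.counit.app X ≫ q ≫ f = adjL.counit.app X ≫ 0
        rw [← Category.assoc, show adjL.counit.app X ≫ q = 0 from h12, zero_comp, comp_zero]
      obtain ⟨g, hg⟩ := Triangle.yoneda_exact₃ _ hT f h1
      set E := (shiftEquiv' D (1 : ℤ) (-1 : ℤ) (by ring)).toAdjunction with hE
      have hW' : IsIso (adjR.unit.app ((ω⟦i⟧ : D)⟦(-1 : ℤ)⟧)) :=
        isIso_unit_of_iso F R adjR
          (((shiftFunctorAdd' D i (-1 : ℤ) (i - 1) (by ring)).app ω).symm)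
          (step1 ω hω (i - 1))
      obtain ⟨h', hh'⟩ := (counit_pre_bij F L R adjL adjR hW').2 (E.homEquiv _ _ g)
      simp only at hh'
      have hg2 : g = (adjL.counit.app X)⟦(1 : ℤ)⟧' ≫ (E.homEquiv _ _).symm h' := by
        have h3 := congrArg (E.homEquiv _ _).symm hh'
        replace h3 := h3.trans ((E.homEquiv _ _).symm_apply_apply g)
        rw [← h3]
        exact E.homEquiv_naturality_left_symm (adjL.counit.app X) h'
      have h31 := comp_distTriang_mor_zero₃₁ _ hT
      dsimp at h31 hg
      rw [hg, hg2]
      exact ((Category.assoc _ _ _).symm.trans (congrArg (· ≫ _) h31)).trans zero_comp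
    have hQ : IsZero Q := hspan₂ Q hvan
    exact (Triangle.isZero₃_iff_isIso₁ _ hT).1 hQ
  haveI : ∀ Y : D, IsIso (adjL.counit.app Y) := step2
  haveI : IsIso adjL.counit := NatIso.isIso_of_isIso_app _
  have ff : F.FullyFaithful := adjL.fullyFaithfulROfIsIsoCounit
  exact ⟨ff.full, ff.faithful⟩
end
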